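/- (Unisolvence of the second enriched family) Let β > -1. If p is a bivariate polynomial of degree at most 2 on the reference triangle T with vertices v₁=(1,0), v₂=(0,1), v₃=(0,0) such that ∫₀¹ p(t v_{j+1} + (1-t)v_{j+2}) dt = 0 and ∫₀¹ t^β(1-t)^β p(t v_j + (1-t) m*) dt = 0 for j = 1,2,3, where m* = (v₁+v₂+v₃)/3 is the barycenter of T (vertex indices mod 3), then p = 0. -/

import Mathlib

/-!
Write `p = ∑ αᵢ φᵢ + ∑ γᵢ ϕᵢ` in the AF3 basis (`bphi`, `sphi`). On the edge opposite vertex `j`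
the `φᵢ` have mean `0` and `ϕᵢ` has mean `δᵢⱼ`, so the Crouzeix–Raviart conditions force `γ = 0`.
On the segment from vertex `j` to the barycenter, `λⱼ = (1 + 2t)/3` and the other two barycentric
coordinates are `(1 - t)/3`, so with `w(t) = tᵝ(1 - t)ᵝ` and `Jₖ = ∫₀¹ w(t) tᵏ dt` the weighted
moment of `∑ αᵢ φᵢ` is `J₂ αⱼ + (J₂ - J₀)/3 · ∑ αᵢ`. This circulant system is invertible since
`J₂ > 0` and, as `w` is symmetric, `J₀ - 2J₂ = ∫₀¹ w(t) · 2t(1 - t) dt > 0`.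
-/

open MvPolynomial

noncomputable section

/-- Vertices of the reference triangle. -/
def vtx : Fin 3 → ℝ × ℝ := ![(1, 0), (0, 1), (0, 0)]

/-- Barycentric coordinates on the reference triangle. -/
def lam : Fin 3 → ℝ × ℝ → ℝ := ![fun q => q.1, fun q => q.2, fun q => 1 - q.1 - q.2]

/-- The AF3 basis functions φᵢ = λᵢ(1 - 3λ_{i+1} - 3λ_{i+2}). -/
def bphi (i : Fin 3) (q : ℝ × ℝ) : ℝ :=
  lam i q * (1 - 3 * lam (i + 1) q - 3 * lam (i + 2) q)

/-- The AF3 basis functions ϕᵢ = 6 λ_{i+1} λ_{i+2}. -/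
def sphi (i : Fin 3) (q : ℝ × ℝ) : ℝ := 6 * lam (i + 1) q * lam (i + 2) q

/-- Evaluation of a bivariate polynomial at a point of ℝ². -/
def evalP (p : MvPolynomial (Fin 2) ℝ) (q : ℝ × ℝ) : ℝ :=
  MvPolynomial.eval ![q.1, q.2] p

/-- Barycenter of the reference triangle. -/
def bary : ℝ × ℝ := (1 / 3 : ℝ) • (vtx 0 + vtx 1 + vtx 2)

open MeasureTheory Set

open Finsupp in
lemma MvPolynomial.eval_eq_of_totalDegree_le_two {R : Type*} [CommRing R]
    {p : MvPolynomial (Fin 2) R} (hp : p.totalDegree ≤ 2) (x : Fin 2 → R) :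
    eval x p = coeff 0 p + coeff (single 0 1) p * x 0 + coeff (single 1 1) p * x 1
      + coeff (single 0 2) p * x 0 ^ 2 + coeff (single 0 1 + single 1 1) p * (x 0 * x 1)
      + coeff (single 1 2) p * x 1 ^ 2 := by
  have hsupp : p.support ⊆ {0, single 0 1, single 1 1, single 0 2, single 0 1 + single 1 1,
      single 1 2} := by
    intro m hm
    have hdeg : m 0 + m 1 ≤ 2 := by
      have := le_totalDegree hm
      rw [Finsupp.sum_fintype _ _ fun _ => rfl, Fin.sum_univ_two] at this
      omega
    have hm : m = single 0 (m 0) + single 1 (m 1) := by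
      ext i; fin_cases i <;> simp
    rw [hm]
    have : m 0 ≤ 2 := by omega
    have : m 1 ≤ 2 := by omega
    interval_cases h0 : m 0 <;> interval_cases h1 : m 1 <;> simp_all
  rw [eval_eq', Finset.sum_subset hsupp fun m _ hm => by simp [notMem_support_iff.mp hm]]
  simp [Finset.sum_insert, Finsupp.ext_iff, Fin.forall_fin_two, Fin.prod_univ_two]
  ring

/- The coefficients of `bphi i` are the values at the vertices, those of `sphi i` the
averages over the edges. -/
lemma quadratic_eq_sum_bphi_add_sum_sphi (a b c d e f : ℝ) (q : ℝ × ℝ) :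
    a + b * q.1 + c * q.2 + d * q.1 ^ 2 + e * (q.1 * q.2) + f * q.2 ^ 2 =
      ∑ i, ![a + b + d, a + c + f, a] i * bphi i q
      + ∑ i, ![a + c / 2 + f / 3, a + b / 2 + d / 3, a + (b + c) / 2 + (d + f) / 3 + e / 6] i
        * sphi i q := by
  simp [Fin.sum_univ_three, bphi, sphi, lam]
  ring

lemma exists_evalP_eq_sum_bphi_add_sum_sphi {p : MvPolynomial (Fin 2) ℝ}
    (hp : p.totalDegree ≤ 2) :
    ∃ α γ : Fin 3 → ℝ, ∀ q, evalP p q = ∑ i, α i * bphi i q + ∑ i, γ i * sphi i q :=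
  ⟨_, _, fun q => by
    rw [evalP, eval_eq_of_totalDegree_le_two hp]
    exact quadratic_eq_sum_bphi_add_sum_sphi _ _ _ _ _ _ q⟩

lemma Fin.sum_univ_three_rotate {M : Type*} [AddCommMonoid M] (f : Fin 3 → M) (j : Fin 3) :
    ∑ i, f i = f j + f (j + 1) + f (j + 2) := by
  rw [← Equiv.sum_comp (Equiv.addLeft j) f]
  simp [Fin.sum_univ_three]

lemma sum_mul_bphi_eq (α : Fin 3 → ℝ) (j : Fin 3) (q : ℝ × ℝ) :
    ∑ i, α i * bphi i q =
      α j * (lam j q * (1 - 3 * lam (j + 1) q - 3 * lam (j + 2) q))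
      + α (j + 1) * (lam (j + 1) q * (1 - 3 * lam (j + 2) q - 3 * lam j q))
      + α (j + 2) * (lam (j + 2) q * (1 - 3 * lam j q - 3 * lam (j + 1) q)) := by
  fin_cases j <;> simp [Fin.sum_univ_three, bphi] <;> ring_nf

lemma sum_mul_sphi_eq (γ : Fin 3 → ℝ) (j : Fin 3) (q : ℝ × ℝ) :
    ∑ i, γ i * sphi i q =
      γ j * (6 * lam (j + 1) q * lam (j + 2) q)
      + γ (j + 1) * (6 * lam (j + 2) q * lam j q)
      + γ (j + 2) * (6 * lam j q * lam (j + 1) q) := by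
  fin_cases j <;> simp [Fin.sum_univ_three, sphi] <;> ring_nf

lemma lam_edge (j : Fin 3) (t : ℝ) :
    lam j (t • vtx (j + 1) + (1 - t) • vtx (j + 2)) = 0 ∧
    lam (j + 1) (t • vtx (j + 1) + (1 - t) • vtx (j + 2)) = t ∧
    lam (j + 2) (t • vtx (j + 1) + (1 - t) • vtx (j + 2)) = 1 - t := by
  fin_cases j <;> simp [lam, vtx]

lemma lam_median (j : Fin 3) (t : ℝ) :
    lam j (t • vtx j + (1 - t) • bary) = (1 + 2 * t) / 3 ∧
    lam (j + 1) (t • vtx j + (1 - t) • bary) = (1 - t) / 3 ∧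
    lam (j + 2) (t • vtx j + (1 - t) • bary) = (1 - t) / 3 := by
  fin_cases j <;> simp [lam, vtx, bary] <;> ring_nf <;> simp

lemma integral_quadratic (A B C : ℝ) :
    ∫ t in (0 : ℝ)..1, (A + B * t + C * t ^ 2) = A + B / 2 + C / 3 := by
  have hint {f : ℝ → ℝ} (hf : Continuous f) : IntervalIntegrable f volume 0 1 :=
    hf.intervalIntegrable 0 1
  rw [intervalIntegral.integral_add (hint (by fun_prop)) (hint (by fun_prop)),
    intervalIntegral.integral_add (hint (by fun_prop)) (hint (by fun_prop))]
  simp only [intervalIntegral.integral_const, intervalIntegral.integral_const_mul, integral_pow]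
  rw [intervalIntegral.integral_const_mul, integral_id]
  ring

lemma integral_edge_sum_bphi_add_sum_sphi (α γ : Fin 3 → ℝ) (j : Fin 3) :
    ∫ t in (0 : ℝ)..1, (∑ i, α i * bphi i (t • vtx (j + 1) + (1 - t) • vtx (j + 2))
      + ∑ i, γ i * sphi i (t • vtx (j + 1) + (1 - t) • vtx (j + 2))) = γ j := by
  simp only [sum_mul_bphi_eq α j, sum_mul_sphi_eq γ j, lam_edge]
  convert integral_quadratic (α (j + 2)) (6 * γ j - 2 * α (j + 1) - 4 * α (j + 2))
    (3 * α (j + 1) + 3 * α (j + 2) - 6 * γ j) using 1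
  · congr 1; ext t; ring
  · ring

section Weight

variable {w : ℝ → ℝ}

lemma integral_weight_mul_quadratic (hw : IntervalIntegrable w volume 0 1) (A B C : ℝ) :
    ∫ t in (0 : ℝ)..1, w t * (A + B * t + C * t ^ 2) =
      A * (∫ t in (0 : ℝ)..1, w t) + B * (∫ t in (0 : ℝ)..1, w t * t)
        + C * ∫ t in (0 : ℝ)..1, w t * t ^ 2 := by
  have h1 : IntervalIntegrable (fun t => w t * t) volume 0 1 :=
    hw.mul_continuousOn continuous_id.continuousOn
  have h2 : IntervalIntegrable (fun t => w t * t ^ 2) volume 0 1 :=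
    hw.mul_continuousOn (continuous_pow 2).continuousOn
  calc ∫ t in (0 : ℝ)..1, w t * (A + B * t + C * t ^ 2)
      = ∫ t in (0 : ℝ)..1, (A * w t + B * (w t * t) + C * (w t * t ^ 2)) := by
        congr 1; ext t; ring
    _ = _ := by
      rw [intervalIntegral.integral_add ((hw.const_mul A).add (h1.const_mul B)) (h2.const_mul C),
        intervalIntegral.integral_add (hw.const_mul A) (h1.const_mul B)]
      simp only [intervalIntegral.integral_const_mul]

lemma integral_weight_mul_median_sum_bphi (hw : IntervalIntegrable w volume 0 1)
    (α : Fin 3 → ℝ) (j : Fin 3) :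
    ∫ t in (0 : ℝ)..1, w t * ∑ i, α i * bphi i (t • vtx j + (1 - t) • bary) =
      α j * (∫ t in (0 : ℝ)..1, w t * t ^ 2)
        + (∑ i, α i) * (((∫ t in (0 : ℝ)..1, w t * t ^ 2) - ∫ t in (0 : ℝ)..1, w t) / 3) := by
  simp only [sum_mul_bphi_eq α j, lam_median]
  convert integral_weight_mul_quadratic hw (-(α j + α (j + 1) + α (j + 2)) / 3) 0
    ((4 * α j + α (j + 1) + α (j + 2)) / 3) using 1
  · congr 1; ext t; ring
  · rw [Fin.sum_univ_three_rotate α j]; ring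

lemma integral_weight_mul_sq_pos (hw : IntervalIntegrable w volume 0 1)
    (hpos : ∀ t ∈ Ioo (0 : ℝ) 1, 0 < w t) : 0 < ∫ t in (0 : ℝ)..1, w t * t ^ 2 :=
  intervalIntegral.intervalIntegral_pos_of_pos_on
    (hw.mul_continuousOn (continuous_pow 2).continuousOn)
    (fun t ht => mul_pos (hpos t ht) (pow_pos ht.1 2)) zero_lt_one

lemma two_mul_integral_weight_mul_sq_lt (hw : IntervalIntegrable w volume 0 1)
    (hpos : ∀ t ∈ Ioo (0 : ℝ) 1, 0 < w t) (hsymm : ∀ t, w (1 - t) = w t) :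
    2 * ∫ t in (0 : ℝ)..1, w t * t ^ 2 < ∫ t in (0 : ℝ)..1, w t := by
  have h2 : IntervalIntegrable (fun t => w t * t ^ 2) volume 0 1 :=
    hw.mul_continuousOn (continuous_pow 2).continuousOn
  have h2' : IntervalIntegrable (fun t => w t * (1 - t) ^ 2) volume 0 1 :=
    hw.mul_continuousOn (by fun_prop)
  have hrefl : ∫ t in (0 : ℝ)..1, w t * (1 - t) ^ 2 = ∫ t in (0 : ℝ)..1, w t * t ^ 2 := by
    simpa [hsymm] using
      intervalIntegral.integral_comp_sub_left (a := 0) (b := 1) (fun t => w t * t ^ 2) 1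
  have hpos' : 0 < ∫ t in (0 : ℝ)..1, (w t - w t * t ^ 2 - w t * (1 - t) ^ 2) := by
    refine intervalIntegral.intervalIntegral_pos_of_pos_on ((hw.sub h2).sub h2')
      (fun t ht => ?_) zero_lt_one
    have : 0 < w t * (2 * t * (1 - t)) := by
      have := hpos t ht; have := ht.1; have := sub_pos.mpr ht.2; positivity
    linarith
  rw [intervalIntegral.integral_sub (hw.sub h2) h2', intervalIntegral.integral_sub hw h2,
    hrefl] at hpos'
  linarith

end Weight

lemma intervalIntegrable_rpow_mul_one_sub_rpow {β : ℝ} (hβ : -1 < β) :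
    IntervalIntegrable (fun t : ℝ => t ^ β * (1 - t) ^ β) volume 0 1 := by
  have hleft : IntervalIntegrable (fun t : ℝ => t ^ β * (1 - t) ^ β) volume 0 (1 / 2) := by
    refine (intervalIntegral.intervalIntegrable_rpow' hβ).mul_continuousOn
      (ContinuousOn.rpow_const (by fun_prop) fun t ht => Or.inl ?_)
    rw [uIcc_of_le (by norm_num)] at ht
    linarith [ht.2]
  have hright := (hleft.comp_sub_left 1).symm
  simp only [sub_sub_cancel, sub_zero] at hright
  refine hleft.trans ?_
  convert hright using 1
  · ext t; ring
  · norm_num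

lemma eq_zero_of_forall_mul_add_sum_mul_eq_zero {n : ℕ} {α : Fin n → ℝ} {a c : ℝ} (ha : a ≠ 0)
    (hac : a + n * c ≠ 0) (h : ∀ j, α j * a + (∑ i, α i) * c = 0) : α = 0 := by
  have hsum : (∑ i, α i) * (a + n * c) = 0 := by
    have := Finset.sum_eq_zero fun j (_ : j ∈ Finset.univ) => h j
    rw [Finset.sum_add_distrib, ← Finset.sum_mul, Finset.sum_const, Finset.card_univ,
      Fintype.card_fin, nsmul_eq_mul] at this
    linear_combination this
  have hS : ∑ i, α i = 0 := (mul_eq_zero.mp hsum).resolve_right hac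
  funext j
  simpa [hS, ha] using h j

theorem second_family_unisolvent (β : ℝ) (hβ : -1 < β)
    (p : MvPolynomial (Fin 2) ℝ) (hp : p.totalDegree ≤ 2)
    (hCR : ∀ j : Fin 3,
      (∫ t in (0:ℝ)..1, evalP p (t • vtx (j + 1) + (1 - t) • vtx (j + 2))) = 0)
    (hG : ∀ j : Fin 3,
      (∫ t in (0:ℝ)..1, t ^ β * (1 - t) ^ β * evalP p (t • vtx j + (1 - t) • bary)) = 0) :
    p = 0 := by
  obtain ⟨α, γ, hrep⟩ := exists_evalP_eq_sum_bphi_add_sum_sphi hp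
  have hγ : γ = 0 := funext fun j => by
    simpa only [hrep, integral_edge_sum_bphi_add_sum_sphi, Pi.zero_apply] using hCR j
  have hw := intervalIntegrable_rpow_mul_one_sub_rpow hβ
  have hpos : ∀ t ∈ Ioo (0 : ℝ) 1, 0 < t ^ β * (1 - t) ^ β := fun t ht =>
    mul_pos (Real.rpow_pos_of_pos ht.1 β) (Real.rpow_pos_of_pos (sub_pos.mpr ht.2) β)
  have hsymm : ∀ t : ℝ, (1 - t) ^ β * (1 - (1 - t)) ^ β = t ^ β * (1 - t) ^ β := fun t => by
    rw [sub_sub_cancel, mul_comm]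
  have hα : α = 0 := by
    refine eq_zero_of_forall_mul_add_sum_mul_eq_zero (integral_weight_mul_sq_pos hw hpos).ne'
      (c := ((∫ t in (0 : ℝ)..1, t ^ β * (1 - t) ^ β * t ^ 2) -
        ∫ t in (0 : ℝ)..1, t ^ β * (1 - t) ^ β) / 3) ?_ fun j => ?_
    · have := two_mul_integral_weight_mul_sq_lt hw hpos hsymm
      push_cast
      linarith
    · simpa [hrep, hγ, integral_weight_mul_median_sum_bphi hw] using hG j
  apply MvPolynomial.funext
  intro x
  have hx : ![x 0, x 1] = x := by ext i; fin_cases i <;> rfl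
  simpa [evalP, hα, hγ, hx] using hrep (x 0, x 1)

end
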